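/- For every ε > 0 there exists a constant C_ε > 0 such that if y ≥ C_ε, then for every s ∈ ℂ with Re s > −(log y)/(1+ε), the Laplace transform integral ∫₀^∞ e^{−sv}·λ_y(v) dv converges absolutely, i.e. ∫₀^∞ |e^{−sv}·λ_y(v)| dv < ∞. -/

import Mathlib

open Real Complex MeasureTheory Filter Set ArithmeticFunction

noncomputable section

/-- `IsDickman ρ` says that `ρ` is the Dickman function on `[0,∞)`,
extended by zero to the negative reals. -/
def IsDickman (ρ : ℝ → ℝ) : Prop :=
  ContinuousOn ρ (Set.Ici 0) ∧
  (∀ t : ℝ, t < 0 → ρ t = 0) ∧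
  (∀ t ∈ Set.Icc (0:ℝ) 1, ρ t = 1) ∧
  (∀ t : ℝ, 1 < t → HasDerivAt ρ (-(ρ (t - 1)) / t) t) ∧
  (∀ t : ℝ, 0 ≤ t → 0 < ρ t)

/-- `IsXi ξ` says that for each `u ≥ 1`, `ξ u` is the largest nonnegative solution of
`e^{ξ} = 1 + u·ξ` (for `u > 1` this is the unique positive solution, and `ξ 1 = 0`). -/
def IsXi (ξ : ℝ → ℝ) : Prop :=
  ∀ u : ℝ, 1 ≤ u → 0 ≤ ξ u ∧ Real.exp (ξ u) = 1 + u * ξ u ∧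
    ∀ v : ℝ, 0 ≤ v → Real.exp v = 1 + u * v → v ≤ ξ u

/-- `u = log x / log y`. -/
def smoothU (x y : ℝ) : ℝ := Real.log x / Real.log y

/-- `Ψ(x,y)`: the number of `y`-smooth positive integers up to `x`. -/
def Psi (x y : ℝ) : ℕ :=
  Nat.card {n : ℕ | 1 ≤ n ∧ (n : ℝ) ≤ x ∧ ∀ p : ℕ, p.Prime → p ∣ n → (p : ℝ) ≤ y}

/-- de Bruijn's `λ_y(u) = ∫ ρ(u − log t/log y) d(⌊t⌋/t)`, written via the decomposition of the
Riemann–Stieltjes measure `d(⌊t⌋/t)` into its jump part (a jump of `1/n` at each integer `n ≥ 1`)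
and its absolutely continuous part (`−⌊t⌋/t²  dt`).  The convention `λ_y(u) = λ_y(u+)` at points
with `y^u ∈ ℤ` is built in by extending `ρ` by zero to the negatives (so `ρ(0)=1` is used at the
jump at `t = y^u`). -/
def lamBruijn (ρ : ℝ → ℝ) (y u : ℝ) : ℝ :=
  (∑' n : ℕ+, ρ (u - Real.log n / Real.log y) / n)
    - ∫ t in Set.Ioi (1:ℝ), ρ (u - Real.log t / Real.log y) * (⌊t⌋ : ℝ) / t ^ 2

/-- `Λ(x,y) = x·λ_y(u)`. -/
def LamBruijn (ρ : ℝ → ℝ) (x y : ℝ) : ℝ := x * lamBruijn ρ y (smoothU x y)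

/-- `I(s) = ∫₀^s (e^v − 1)/v dv`, along the segment from `0` to `s`
(parametrized by `v = t·s`, `t ∈ [0,1]`). -/
def Ifun (s : ℂ) : ℂ := ∫ t in (0:ℝ)..1, (Complex.exp (t * s) - 1) / t

/-- The partial zeta function `ζ(s,y) = ∏_{p ≤ y} (1 − p^{−s})⁻¹`. -/
def zetaSmooth (s : ℂ) (y : ℝ) : ℂ :=
  ∏ p ∈ Nat.primesBelow (⌊y⌋₊ + 1), ((1 : ℂ) - (p : ℂ) ^ (-s))⁻¹

/-- The real-valued partial zeta function, for real arguments. -/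
def zetaSmoothR (s y : ℝ) : ℝ :=
  ∏ p ∈ Nat.primesBelow (⌊y⌋₊ + 1), ((1 : ℝ) - (p : ℝ) ^ (-s))⁻¹

/-- `F(s,y) = exp(γ + I((1−s) log y))·ζ(s)·(s−1)·log y`. -/
def Ffun (s : ℂ) (y : ℝ) : ℂ :=
  Complex.exp ((Real.eulerMascheroniConstant : ℂ) + Ifun ((1 - s) * Real.log y)) *
    riemannZeta s * (s - 1) * (Real.log y : ℂ)

/-- `G(s,y) = ζ(s,y)/F(s,y)`. -/
def Gfun (s : ℂ) (y : ℝ) : ℂ := zetaSmooth s y / Ffun s y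

/-- The saddle point `β = 1 − ξ(u)/log y`. -/
def betaSaddle (ξ : ℝ → ℝ) (x y : ℝ) : ℝ := 1 - ξ (smoothU x y) / Real.log y

/-- Chebyshev's function `ψ(y) = ∑_{n ≤ y} Λ(n)`. -/
def chebyshevPsi (y : ℝ) : ℝ := ∑ n ∈ Finset.Icc 1 ⌊y⌋₊, ArithmeticFunction.vonMangoldt n

/-- A nontrivial zero of the Riemann zeta function. -/
def IsNontrivialZetaZero (z : ℂ) : Prop := riemannZeta z = 0 ∧ 0 < z.re ∧ z.re < 1

/-- The multiplicity of `z` as a zero of `ζ`: the largest `n` such that `ζ(s) = (s−z)^n·g(s)`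
near `z` with `g` analytic. -/
def zetaZeroOrder (z : ℂ) : ℕ :=
  sSup {n : ℕ | ∃ g : ℂ → ℂ, AnalyticAt ℂ g z ∧
    ∀ᶠ s in nhds z, riemannZeta s = (s - z) ^ n * g s}

/-- `∑_{ρ : |ρ| ≤ T} f(ρ)`, the sum over nontrivial zeros of `ζ` of modulus at most `T`,
counted with multiplicity (the sum is in fact finite). -/
def zetaZeroSum (T : ℝ) (f : ℂ → ℂ) : ℂ :=
  ∑' z : {z : ℂ // IsNontrivialZetaZero z ∧ ‖z‖ ≤ T},
    (zetaZeroOrder z : ℂ) * f z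

/-- `(1/2πi) ∫_{β−iT}^{β+iT} f(s) ds`, the integral along the vertical segment `Re s = β`. -/
def vlineIntegral (β T : ℝ) (f : ℂ → ℂ) : ℂ :=
  (2 * Real.pi : ℂ)⁻¹ * ∫ t in (-T)..T, f (β + t * Complex.I)

/-- `K(t) = t·ζ(t+1)/(t+1)`. -/
def Kfun (t : ℂ) : ℂ := t * riemannZeta (t + 1) / (t + 1)

/-- `L(y) = exp((log y)^{3/5} (log log y)^{−1/5})`. -/
def Lfun (y : ℝ) : ℝ :=
  Real.exp ((Real.log y) ^ ((3:ℝ)/5) * (Real.log (Real.log y)) ^ (-(1:ℝ)/5))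

/-- The Linear Independence hypothesis for `ζ`: the positive imaginary parts of the
nontrivial zeros are linearly independent over `ℚ`. -/
def ZetaLinearIndependence : Prop :=
  LinearIndependent ℚ
    (fun t : {t : ℝ // 0 < t ∧ ∃ z : ℂ, IsNontrivialZetaZero z ∧ z.im = t} => (t : ℝ))

/-- The entire function `ζ(s)(s−1)` (with its removable singularity at `s = 1` filled in). -/
def zetaTimesSMinusOne (s : ℂ) : ℂ := if s = 1 then 1 else riemannZeta s * (s - 1)


/-- `max_{|v| ≤ r} |f(v)|`. -/
def maxAbsOn (f : ℝ → ℂ) (r : ℝ) : ℝ :=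
  sSup ((fun v => ‖f v‖) '' Set.Icc (-r) r)

/-- A convex zero-free (for `ζ(s)(s−1)`) neighbourhood of the strip
`{0 ≤ Re s ≤ 1, |Im s| ≤ 1}` together with the real ray `(1,∞)`, on which the
branch of `log(ζ(s)(s−1))` that is real for real `s > 1` is well defined. -/
def branchDomain1 : Set ℂ := {s : ℂ | -1 ≤ s.re ∧ |s.im| ≤ 2}

/-- Under RH, `ζ(s)(s−1)` is also zero-free on `{Re s ≥ 2/3}`; the branch of
`log(ζ(s)(s−1))` extends there. -/
def branchDomain2 : Set ℂ := branchDomain1 ∪ {s : ℂ | 2/3 ≤ s.re}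

/-- `log G₁(s,y) = ∑_{n ≤ y} Λ(n)/(n^s log n) − (log(ζ(s)(s−1)) + log log y + γ + I((1−s)log y))`,
where `lz` is the branch of `log(ζ(s)(s−1))` that is real for real `s > 1`. -/
def logG1 (lz : ℂ → ℂ) (y : ℝ) (s : ℂ) : ℂ :=
  (∑ n ∈ Finset.Icc 1 ⌊y⌋₊,
      (ArithmeticFunction.vonMangoldt n : ℂ) / ((n : ℂ) ^ s * (Real.log n : ℂ)))
    - (lz s + (Real.log (Real.log y) : ℂ) + (Real.eulerMascheroniConstant : ℂ)
        + Ifun ((1 - s) * (Real.log y : ℂ)))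

/-!
Put `K(t) = ρ(v - log t / log y)`; it vanishes for `t > y^v`, so `λ_y(v)` is the finite sum of the
pieces of `∫ K d(⌊t⌋/t)` over `[n, n+1)`, `1 ≤ n ≤ y^v`. There `∫ n/t² dt = 1/(n+1)` almost cancels
the jump `1/n`, leaving `O((osc K + K(n)/n)/n)`. The delay equation gives `t ρ(t) ≤ ρ(t-1)`, hence
`ρ(u) ≤ 1/⌊u⌋! ≪_b e^{-bu}`, and `|ρ'(u)| ≤ ρ(u-1)`; so with `θ = b / log y`, `K(t) ≪ e^{-bv} t^θ`
and `osc K ≪ e^{-bv} n^{θ-1}` on `[n, n+1]`. For `b < log y` the pieces are `≪ e^{-bv} n^{θ-2}`, a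
summable sequence, and the last one is `O(y^{-v})`: thus `λ_y(v) ≪ e^{-bv}`, and `b = log y/(1+ε)`
gives absolute convergence for `Re s > -b`.
-/

namespace IsDickman

variable {ρ : ℝ → ℝ}

theorem nonneg (hρ : IsDickman ρ) (t : ℝ) : 0 ≤ ρ t := by
  rcases lt_or_ge t 0 with ht | ht
  · exact (hρ.2.1 t ht).ge
  · exact (hρ.2.2.2.2 t ht).le

theorem measurable (hρ : IsDickman ρ) : Measurable ρ := by
  have hcont : Continuous fun t => ρ (max t 0) :=
    hρ.1.comp_continuous (by fun_prop) fun t => le_max_right t 0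
  have hρ_eq : ρ = (Ici 0).indicator fun t => ρ (max t 0) := by
    ext t
    rcases lt_or_ge t 0 with ht | ht
    · simp [hρ.2.1 t ht, ht]
    · simp [ht]
  rw [hρ_eq]
  exact hcont.measurable.indicator measurableSet_Ici

theorem antitoneOn (hρ : IsDickman ρ) : AntitoneOn ρ (Ici 0) := by
  have hIcc : AntitoneOn ρ (Icc 0 1) := fun a ha b hb _ => by rw [hρ.2.2.1 a ha, hρ.2.2.1 b hb]
  have hIci : AntitoneOn ρ (Ici 1) := by
    refine antitoneOn_of_hasDerivWithinAt_nonpos (convex_Ici 1)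
      (hρ.1.mono (Ici_subset_Ici.2 zero_le_one)) (fun t ht => ?_) (fun t ht => ?_)
      (f' := fun t => -ρ (t - 1) / t)
    · rw [interior_Ici] at ht
      exact (hρ.2.2.2.1 t ht).hasDerivWithinAt
    · rw [interior_Ici] at ht
      exact div_nonpos_of_nonpos_of_nonneg (neg_nonpos.2 (hρ.nonneg _)) (zero_le_one.trans ht.le)
  rw [← Icc_union_Ici_eq_Ici zero_le_one]
  exact hIcc.union_right hIci (isGreatest_Icc zero_le_one) isLeast_Ici

theorem le_one (hρ : IsDickman ρ) (t : ℝ) : ρ t ≤ 1 := by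
  rcases lt_or_ge t 0 with ht | ht
  · rw [hρ.2.1 t ht]; exact zero_le_one
  · calc ρ t ≤ ρ 0 := hρ.antitoneOn self_mem_Ici ht ht
      _ = 1 := hρ.2.2.1 0 (left_mem_Icc.2 zero_le_one)

theorem intervalIntegrable (hρ : IsDickman ρ) (a b : ℝ) : IntervalIntegrable ρ volume a b :=
  intervalIntegrable_iff.2 <| Measure.integrableOn_of_bounded measure_Ioc_lt_top.ne
    hρ.measurable.aestronglyMeasurable <| ae_of_all _ fun t => by
      rw [Real.norm_of_nonneg (hρ.nonneg t)]; exact hρ.le_one t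

/-- The delay equation in integrated form: `(t ρ(t))' = ρ(t) - ρ(t-1)`. -/
theorem mul_eq_integral (hρ : IsDickman ρ) {t : ℝ} (ht : 1 ≤ t) :
    t * ρ t = ∫ x in (t - 1)..t, ρ x := by
  have hρ1 : ρ 1 = 1 := hρ.2.2.1 1 (right_mem_Icc.2 zero_le_one)
  have hshift : IntervalIntegrable (fun x => ρ (x - 1)) volume 1 t := by
    simpa using (hρ.intervalIntegrable 0 (t - 1)).comp_sub_right 1
  have hftc : ∫ x in (1:ℝ)..t, (ρ x - ρ (x - 1)) = t * ρ t - 1 * ρ 1 := by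
    refine intervalIntegral.integral_eq_sub_of_hasDerivAt_of_le ht
      (continuousOn_id.mul (hρ.1.mono fun x hx => zero_le_one.trans hx.1)) (fun x hx => ?_)
      ((hρ.intervalIntegrable 1 t).sub hshift)
    have hx0 : x ≠ 0 := (zero_lt_one.trans hx.1).ne'
    exact ((hasDerivAt_id' x).mul (hρ.2.2.2.1 x hx.1)).congr_deriv (by field_simp; ring)
  have hint01 : ∫ x in (0:ℝ)..1, ρ x = 1 := by
    rw [intervalIntegral.integral_congr (g := fun _ => (1:ℝ)) fun x hx => hρ.2.2.1 x
      (by rwa [uIcc_of_le zero_le_one] at hx)]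
    simp
  rw [intervalIntegral.integral_sub (hρ.intervalIntegrable 1 t) hshift,
    intervalIntegral.integral_comp_sub_right, sub_self,
    intervalIntegral.integral_interval_sub_interval_comm (hρ.intervalIntegrable _ _)
      (hρ.intervalIntegrable _ _) (hρ.intervalIntegrable _ _),
    intervalIntegral.integral_symm 0 1, intervalIntegral.integral_symm (t - 1) t, hint01,
    hρ1] at hftc
  linarith

theorem mul_le_sub_one (hρ : IsDickman ρ) {t : ℝ} (ht : 1 ≤ t) : t * ρ t ≤ ρ (t - 1) := by
  rw [hρ.mul_eq_integral ht]
  calc ∫ x in (t - 1)..t, ρ x ≤ ∫ _ in (t - 1)..t, ρ (t - 1) :=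
        intervalIntegral.integral_mono_on (by linarith) (hρ.intervalIntegrable _ _)
          intervalIntegrable_const fun x hx =>
            hρ.antitoneOn (mem_Ici.2 (by linarith)) (mem_Ici.2 (by linarith [hx.1])) hx.1
    _ = ρ (t - 1) := by simp

theorem le_inv_factorial (hρ : IsDickman ρ) (n : ℕ) {t : ℝ} (ht : n ≤ t) :
    ρ t ≤ (n.factorial : ℝ)⁻¹ := by
  induction n generalizing t with
  | zero => simpa using hρ.le_one t
  | succ n ih =>
    push_cast at ht
    have ht0 : 0 < t := by linarith [n.cast_nonneg (α := ℝ)]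
    calc ρ t ≤ ρ (t - 1) / t := by
          rw [le_div_iff₀ ht0, mul_comm]
          exact hρ.mul_le_sub_one (by linarith [n.cast_nonneg (α := ℝ)])
      _ ≤ (n.factorial : ℝ)⁻¹ / (n + 1) := by
          gcongr
          exact ih (by linarith)
      _ = ((n + 1).factorial : ℝ)⁻¹ := by push_cast [Nat.factorial_succ]; field_simp

theorem le_mul_exp_neg_mul (hρ : IsDickman ρ) {b : ℝ} (hb : 0 ≤ b) (t : ℝ) :
    ρ t ≤ Real.exp (Real.exp b + b) * Real.exp (-(b * t)) := by
  rcases lt_or_ge t 0 with ht | ht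
  · rw [hρ.2.1 t ht]; positivity
  set n := ⌊t⌋₊
  have hn : t < n + 1 := Nat.lt_floor_add_one t
  calc ρ t ≤ (n.factorial : ℝ)⁻¹ := hρ.le_inv_factorial n (Nat.floor_le ht)
    _ = Real.exp b ^ n / n.factorial * Real.exp (-(b * n)) := by
        rw [← Real.exp_nat_mul, div_mul_eq_mul_div, ← Real.exp_add]; ring_nf; simp
    _ ≤ Real.exp (Real.exp b) * Real.exp (b - b * t) := by
        gcongr
        · exact Real.pow_div_factorial_le_exp _ (Real.exp_nonneg b) n
        · nlinarith
    _ = Real.exp (Real.exp b + b) * Real.exp (-(b * t)) := by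
        rw [← Real.exp_add, ← Real.exp_add]; ring_nf

/-- On `(1, ∞)` the slope of `ρ` is `-ρ(x-1)/x ≥ -ρ(a-1)` for `x ≥ a`. -/
theorem sub_le_mul_apply_max_sub_one (hρ : IsDickman ρ) {a c : ℝ} (ha : 0 ≤ a)
    (hac : a ≤ c) :
    ρ a - ρ c ≤ (c - a) * ρ (max (a - 1) 0) := by
  set D := ρ (max (a - 1) 0)
  have hρ_max : ∀ x, 0 ≤ x → ρ (max x 1) = ρ x := fun x hx => by
    rcases le_total x 1 with h | h
    · rw [max_eq_right h, hρ.2.2.1 x ⟨hx, h⟩, hρ.2.2.1 1 (right_mem_Icc.2 zero_le_one)]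
    · rw [max_eq_left h]
  have hmono : MonotoneOn (fun x => ρ x + D * x) (Icc (max a 1) (max c 1)) := by
    refine monotoneOn_of_hasDerivWithinAt_nonneg (f' := fun x => -ρ (x - 1) / x + D)
      (convex_Icc _ _) ((hρ.1.mono fun x hx => ?_).add (continuousOn_const.mul continuousOn_id))
      (fun x hx => ?_) (fun x hx => ?_)
    · exact zero_le_one.trans ((le_max_right a 1).trans hx.1)
    · rw [interior_Icc] at hx
      exact ((hρ.2.2.2.1 x ((le_max_right a 1).trans_lt hx.1)).add
        ((hasDerivAt_id' x).const_mul D)).hasDerivWithinAt.congr_deriv (by ring)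
    · rw [interior_Icc] at hx
      have hx1 : 1 < x := (le_max_right a 1).trans_lt hx.1
      have hax : a < x := (le_max_left a 1).trans_lt hx.1
      have hD : ρ (x - 1) ≤ D := hρ.antitoneOn (mem_Ici.2 (le_max_right _ _))
        (mem_Ici.2 (by linarith)) (max_le (by linarith) (by linarith))
      have hdiv : ρ (x - 1) / x ≤ ρ (x - 1) := div_le_self (hρ.nonneg _) hx1.le
      rw [neg_div]
      linarith
  have hac' : max a 1 ≤ max c 1 := max_le_max_right 1 hac
  have key := hmono (left_mem_Icc.2 hac') (right_mem_Icc.2 hac') hac'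
  simp only [hρ_max a ha, hρ_max c (ha.trans hac)] at key
  have hwidth : max c 1 - max a 1 ≤ c - a := by simp only [max_def]; split_ifs <;> linarith
  nlinarith [hρ.nonneg (max (a - 1) 0)]

end IsDickman

theorem intervalIntegrable_div_sq {a b : ℝ} (ha : 0 < a) (hab : a ≤ b) (c : ℝ) :
    IntervalIntegrable (fun t => c / t ^ 2) volume a b :=
  ContinuousOn.intervalIntegrable <| continuousOn_const.div (continuousOn_pow 2) fun t ht =>
    pow_ne_zero 2 (ha.trans_le (by rw [uIcc_of_le hab] at ht; exact ht.1)).ne'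

theorem integral_div_sq {a b : ℝ} (ha : 0 < a) (hab : a ≤ b) (c : ℝ) :
    ∫ t in a..b, c / t ^ 2 = c / a - c / b := by
  rw [intervalIntegral.integral_eq_sub_of_hasDerivAt (f := fun t => -(c * t⁻¹)) (fun t ht => ?_)
    (intervalIntegrable_div_sq ha hab c)]
  · ring
  · have ht0 : t ≠ 0 := (ha.trans_le (by rw [uIcc_of_le hab] at ht; exact ht.1)).ne'
    exact ((hasDerivAt_inv ht0).const_mul c).neg.congr_deriv (by field_simp)

theorem MeasureTheory.LocallyIntegrable.intervalIntegrable_mul_div_sq {f : ℝ → ℝ}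
    (hf : LocallyIntegrable f) {a b : ℝ} (ha : 0 < a) (hab : a ≤ b) (c : ℝ) :
    IntervalIntegrable (fun t => c * f t / t ^ 2) volume a b := by
  rw [intervalIntegrable_iff_integrableOn_Icc_of_le hab]
  refine ((hf.integrableOn_isCompact isCompact_Icc).mul_continuousOn (g' := fun t => c / t ^ 2)
    (continuousOn_const.div (continuousOn_pow 2) fun t ht => ?_) isCompact_Icc).congr_fun
    (fun t _ => by ring) measurableSet_Icc
  exact pow_ne_zero 2 (ha.trans_le ht.1).ne'

theorem eqOn_mul_floor_div_sq (f : ℝ → ℝ) (n : ℕ) :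
    EqOn (fun t => f t * ⌊t⌋ / t ^ 2) (fun t => n * f t / t ^ 2) (Ioo n (n + 1)) := by
  intro t ht
  simp only
  rw [Int.floor_eq_iff.2 ⟨by exact_mod_cast ht.1.le, by exact_mod_cast ht.2⟩]
  push_cast
  ring

theorem MeasureTheory.LocallyIntegrable.intervalIntegrable_mul_floor_div_sq {f : ℝ → ℝ}
    (hf : LocallyIntegrable f) {n : ℕ} (hn : 1 ≤ n) :
    IntervalIntegrable (fun t => f t * ⌊t⌋ / t ^ 2) volume n (n + 1) :=
  (hf.intervalIntegrable_mul_div_sq (by exact_mod_cast hn) (by linarith) n).congr_uIoo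
    ((eqOn_mul_floor_div_sq f n).symm.mono (uIoo_of_le (by linarith)).subset)

/-- The contribution of `[n, n+1)` to the Stieltjes integral `∫ f d(⌊t⌋/t)`: the jump `1/n` at
`n` and the density `-⌊t⌋/t²`. -/
def floorStieltjesTerm (f : ℝ → ℝ) (n : ℕ) : ℝ :=
  f n / n - ∫ t in (n : ℝ)..(n + 1), f t * ⌊t⌋ / t ^ 2

/-- On `[n, n+1)` the density is `n/t²`, whose integral `1/(n+1)` nearly cancels the jump `1/n`;
what is left is controlled by the oscillation `M` of `f` on the interval. -/
theorem abs_floorStieltjesTerm_le {f : ℝ → ℝ} (hf : LocallyIntegrable f) {n : ℕ}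
    (hn : 1 ≤ n) {M : ℝ} (hM : ∀ t ∈ Icc (n : ℝ) (n + 1), |f n - f t| ≤ M) :
    |floorStieltjesTerm f n| ≤ (M + |f n| / n) / (n + 1) := by
  have hn0 : (0 : ℝ) < n := by exact_mod_cast hn
  have hle : (n : ℝ) ≤ n + 1 := by linarith
  have hsplit : f n / n - ∫ t in (n : ℝ)..(n + 1), f t * ⌊t⌋ / t ^ 2
      = (∫ t in (n : ℝ)..(n + 1), n * (f n - f t) / t ^ 2) + f n / (n * (n + 1)) := by
    have hsub : ∫ t in (n : ℝ)..(n + 1), n * (f n - f t) / t ^ 2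
        = (∫ t in (n : ℝ)..(n + 1), n * f n / t ^ 2) -
            ∫ t in (n : ℝ)..(n + 1), n * f t / t ^ 2 := by
      rw [← intervalIntegral.integral_sub (intervalIntegrable_div_sq hn0 hle _)
        (hf.intervalIntegrable_mul_div_sq hn0 hle n)]
      congr 1; ext t; ring
    rw [hsub, intervalIntegral.integral_congr_Ioo_of_le hle (eqOn_mul_floor_div_sq f n),
      integral_div_sq hn0 hle]
    field_simp
    ring
  have hbound : |∫ t in (n : ℝ)..(n + 1), n * (f n - f t) / t ^ 2| ≤ M / (n + 1) := by
    calc _ = ‖∫ t in (n : ℝ)..(n + 1), n * (f n - f t) / t ^ 2‖ := (Real.norm_eq_abs _).symm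
      _ ≤ ∫ t in (n : ℝ)..(n + 1), n * M / t ^ 2 := by
          refine intervalIntegral.norm_integral_le_of_norm_le hle (ae_of_all _ fun t ht => ?_)
            (intervalIntegrable_div_sq hn0 hle _)
          rw [Real.norm_eq_abs, abs_div, abs_mul, abs_of_pos hn0, abs_of_nonneg (sq_nonneg t)]
          gcongr
          exact hM t ⟨ht.1.le, ht.2⟩
      _ = M / (n + 1) := by rw [integral_div_sq hn0 hle]; field_simp; ring
  rw [floorStieltjesTerm, hsplit]
  calc _ ≤ |∫ t in (n : ℝ)..(n + 1), n * (f n - f t) / t ^ 2| + |f n / (n * (n + 1))| :=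
        abs_add_le _ _
    _ ≤ M / (n + 1) + |f n| / (n * (n + 1)) := by
        rw [abs_div, abs_of_pos (by positivity : (0:ℝ) < n * (n + 1))]
        gcongr
    _ = (M + |f n| / n) / (n + 1) := by field_simp

theorem tsum_div_sub_integral_floor_eq_sum {f : ℝ → ℝ} (hf : LocallyIntegrable f) {X : ℝ}
    (hX : ∀ t, X < t → f t = 0) :
    ∑' n : ℕ+, f n / n - ∫ t in Ioi 1, f t * ⌊t⌋ / t ^ 2
      = ∑ n ∈ Finset.Icc 1 ⌊X⌋₊, floorStieltjesTerm f n := by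
  set N := ⌊X⌋₊
  have hvanish : ∀ t : ℝ, N + 1 ≤ t → f t = 0 := fun t ht =>
    hX t ((Nat.lt_floor_add_one X).trans_le ht)
  have hsum : ∑' n : ℕ+, f n / n = ∑ n ∈ Finset.Icc 1 N, f n / n := by
    rw [tsum_pnat_eq_tsum_of_eq_zero (f := fun n : ℕ => f n / n) (by simp),
      tsum_eq_sum (s := Finset.range (N + 1)) fun n hn => ?_, Finset.range_eq_Ico,
      Finset.sum_eq_sum_Ico_succ_bot (by omega : 0 < N + 1), zero_add,
      Finset.Ico_add_one_right_eq_Icc]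
    · simp
    · have hNn : N + 1 ≤ n := by simpa using hn
      rw [hvanish n (by exact_mod_cast hNn), zero_div]
  have hint : ∫ t in Ioi 1, f t * ⌊t⌋ / t ^ 2
      = ∑ n ∈ Finset.Icc 1 N, ∫ t in (n : ℝ)..(n + 1), f t * ⌊t⌋ / t ^ 2 := by
    rw [setIntegral_eq_of_subset_of_forall_sdiff_eq_zero measurableSet_Ioi
        (show Ioc (1 : ℝ) (N + 1) ⊆ Ioi 1 from Ioc_subset_Ioi_self) fun t ht => ?_,
      ← intervalIntegral.integral_of_le (by linarith [N.cast_nonneg (α := ℝ)]),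
      ← Finset.Ico_add_one_right_eq_Icc]
    · have := intervalIntegral.sum_integral_adjacent_intervals_Ico (a := fun n : ℕ => (n : ℝ))
        (f := fun t => f t * ⌊t⌋ / t ^ 2) (μ := volume) (Nat.le_add_left 1 N)
        fun n hn => by simpa using hf.intervalIntegrable_mul_floor_div_sq hn.1
      push_cast at this
      exact this.symm
    · rw [hvanish t (not_le.1 fun h => ht.2 ⟨ht.1, h⟩).le]
      simp
  rw [hsum, hint, ← Finset.sum_sub_distrib]
  rfl

theorem exp_neg_mul_sub_log_div (b v L : ℝ) {t : ℝ} (ht : 0 < t) :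
    Real.exp (-(b * (v - Real.log t / L))) = Real.exp (-(b * v)) * t ^ (b / L) := by
  rw [Real.rpow_def_of_pos ht, ← Real.exp_add]
  ring_nf

def dickmanKernel (ρ : ℝ → ℝ) (y v t : ℝ) : ℝ := ρ (v - Real.log t / Real.log y)

namespace IsDickman

variable {ρ : ℝ → ℝ} {y v : ℝ}

theorem dickmanKernel_nonneg (hρ : IsDickman ρ) (t : ℝ) : 0 ≤ dickmanKernel ρ y v t :=
  hρ.nonneg _

theorem dickmanKernel_le_one (hρ : IsDickman ρ) (t : ℝ) : dickmanKernel ρ y v t ≤ 1 :=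
  hρ.le_one _

theorem dickmanKernel_eq_zero (hρ : IsDickman ρ) (hy : 1 < y) {t : ℝ} (ht : y ^ v < t) :
    dickmanKernel ρ y v t = 0 := by
  have hy0 : 0 < y := zero_lt_one.trans hy
  refine hρ.2.1 _ (sub_neg.2 ((lt_div_iff₀ (Real.log_pos hy)).2 ?_))
  rw [← Real.log_rpow hy0]
  exact Real.log_lt_log (Real.rpow_pos_of_pos hy0 v) ht

theorem locallyIntegrable_dickmanKernel (hρ : IsDickman ρ) :
    LocallyIntegrable (dickmanKernel ρ y v) :=
  (locallyIntegrable_const (1 : ℝ)).mono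
    (hρ.measurable.comp
      (measurable_const.sub (Real.measurable_log.div_const _))).aestronglyMeasurable
    (ae_of_all _ fun t => by
      rw [norm_one, Real.norm_of_nonneg (hρ.dickmanKernel_nonneg t)]
      exact hρ.dickmanKernel_le_one t)

theorem dickmanKernel_le (hρ : IsDickman ρ) {b : ℝ} (hb : 0 ≤ b) {t : ℝ} (ht : 0 < t) :
    dickmanKernel ρ y v t
      ≤ Real.exp (Real.exp b + b) * Real.exp (-(b * v)) * t ^ (b / Real.log y) := by
  calc dickmanKernel ρ y v t
      ≤ Real.exp (Real.exp b + b) * Real.exp (-(b * (v - Real.log t / Real.log y))) :=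
        hρ.le_mul_exp_neg_mul hb _
    _ = _ := by rw [exp_neg_mul_sub_log_div b v _ ht, mul_assoc]

theorem abs_dickmanKernel_sub_le (hρ : IsDickman ρ) (hy : 1 < y) {b : ℝ} (hb : 0 ≤ b)
    {s t : ℝ} (hs : 0 < s) (hst : s ≤ t) (hty : t ≤ y ^ v) :
    |dickmanKernel ρ y v s - dickmanKernel ρ y v t|
      ≤ (Real.log t - Real.log s) / Real.log y *
        (Real.exp (Real.exp b + b) * Real.exp b * Real.exp (-(b * v)) * t ^ (b / Real.log y)) := by
  have hL : 0 < Real.log y := Real.log_pos hy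
  have hy0 : 0 < y := zero_lt_one.trans hy
  set a := v - Real.log t / Real.log y with ha_def
  set c := v - Real.log s / Real.log y
  have hlog : Real.log s ≤ Real.log t := Real.log_le_log hs hst
  have ha : 0 ≤ a := by
    rw [sub_nonneg, div_le_iff₀ hL, ← Real.log_rpow hy0]
    exact Real.log_le_log (hs.trans_le hst) hty
  have hac : a ≤ c := by unfold a c; gcongr
  have hca : c - a = (Real.log t - Real.log s) / Real.log y := by unfold a c; ring
  have hdecay : ρ (max (a - 1) 0)
      ≤ Real.exp (Real.exp b + b) * Real.exp b * Real.exp (-(b * v)) * t ^ (b / Real.log y) :=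
    calc ρ (max (a - 1) 0) ≤ Real.exp (Real.exp b + b) * Real.exp (-(b * max (a - 1) 0)) :=
          hρ.le_mul_exp_neg_mul hb _
      _ ≤ Real.exp (Real.exp b + b) * Real.exp (b - b * a) := by
          gcongr
          nlinarith [le_max_left (a - 1) 0]
      _ = _ := by
          rw [sub_eq_add_neg, Real.exp_add b, ha_def,
            exp_neg_mul_sub_log_div b v _ (hs.trans_le hst)]
          ring
  show |ρ c - ρ a| ≤ _
  rw [abs_sub_comm, abs_of_nonneg (sub_nonneg.2 (hρ.antitoneOn ha (ha.trans hac) hac)), ← hca]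
  exact (hρ.sub_le_mul_apply_max_sub_one ha hac).trans
    (mul_le_mul_of_nonneg_left hdecay (by linarith))

theorem abs_floorStieltjesTerm_dickmanKernel_le (hρ : IsDickman ρ) (hy : 1 < y) {b : ℝ}
    (hb : 0 ≤ b) (hbl : b ≤ Real.log y) {n : ℕ} (hn : 1 ≤ n)
    (hny : (n : ℝ) + 1 ≤ y ^ v) :
    |floorStieltjesTerm (dickmanKernel ρ y v) n|
      ≤ Real.exp (Real.exp b + b) * Real.exp b * (1 / Real.log y + 1) * Real.exp (-(b * v)) *
        (n : ℝ) ^ (b / Real.log y - 2) := by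
  have hL : 0 < Real.log y := Real.log_pos hy
  have hn0 : (0 : ℝ) < n := by exact_mod_cast hn
  set θ := b / Real.log y
  have hθ0 : 0 ≤ θ := div_nonneg hb hL.le
  have hθ1 : θ ≤ 1 := (div_le_one hL).2 hbl
  set A := Real.exp (Real.exp b + b) * Real.exp b * Real.exp (-(b * v))
  have hA : 0 ≤ A := by positivity
  have hM : ∀ t ∈ Icc (n : ℝ) (n + 1),
      |dickmanKernel ρ y v n - dickmanKernel ρ y v t|
        ≤ A * (n + 1) ^ θ / (n * Real.log y) := by
    intro t ht
    have hlog : Real.log t - Real.log n ≤ 1 / n := by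
      rw [← Real.log_div (hn0.trans_le ht.1).ne' hn0.ne']
      refine (Real.log_le_sub_one_of_pos (div_pos (hn0.trans_le ht.1) hn0)).trans ?_
      rw [div_sub_one hn0.ne', div_le_div_iff_of_pos_right hn0]
      linarith [ht.2]
    calc _ ≤ (Real.log t - Real.log n) / Real.log y * (A * t ^ θ) :=
          hρ.abs_dickmanKernel_sub_le hy hb hn0 ht.1 (ht.2.trans hny)
      _ ≤ 1 / n / Real.log y * (A * (n + 1) ^ θ) := by
          have ht0 : 0 ≤ t := hn0.le.trans ht.1
          calc _ ≤ 1 / n / Real.log y * (A * t ^ θ) :=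
                mul_le_mul_of_nonneg_right (by gcongr) (mul_nonneg hA (Real.rpow_nonneg ht0 θ))
            _ ≤ _ := mul_le_mul_of_nonneg_left (by gcongr; exact ht.2) (by positivity)
      _ = A * (n + 1) ^ θ / (n * Real.log y) := by field_simp
  have hKn : |dickmanKernel ρ y v n| ≤ A * (n + 1) ^ θ := by
    rw [abs_of_nonneg (hρ.dickmanKernel_nonneg _)]
    calc _ ≤ Real.exp (Real.exp b + b) * Real.exp (-(b * v)) * (n : ℝ) ^ θ :=
          hρ.dickmanKernel_le hb hn0
      _ ≤ Real.exp (Real.exp b + b) * Real.exp (-(b * v)) * (Real.exp b * (n + 1) ^ θ) := by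
          gcongr
          exact (Real.rpow_le_rpow hn0.le (by linarith) hθ0).trans
            (le_mul_of_one_le_left (by positivity) (Real.one_le_exp hb))
      _ = A * (n + 1) ^ θ := by ring
  calc _ ≤ (A * (n + 1) ^ θ / (n * Real.log y) + |dickmanKernel ρ y v n| / n) / (n + 1) :=
        abs_floorStieltjesTerm_le hρ.locallyIntegrable_dickmanKernel hn hM
    _ ≤ (A * (n + 1) ^ θ / (n * Real.log y) + A * (n + 1) ^ θ / n) / (n + 1) := by gcongr
    _ = A * (1 / Real.log y + 1) * ((n + 1) ^ θ / (n + 1)) / n := by field_simp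
    _ = A * (1 / Real.log y + 1) * (n + 1) ^ (θ - 1) / n := by
        rw [Real.rpow_sub_one (by positivity)]
    _ ≤ A * (1 / Real.log y + 1) * (n : ℝ) ^ (θ - 1) / n := by
        gcongr (A * (1 / Real.log y + 1) * ?_) / _
        exact Real.rpow_le_rpow_of_nonpos hn0 (by linarith) (by linarith)
    _ = A * (1 / Real.log y + 1) * (n : ℝ) ^ (θ - 2) := by
        rw [Real.rpow_sub hn0, Real.rpow_sub hn0, Real.rpow_one, Real.rpow_two]
        field_simp
    _ = _ := by simp only [A]; ring

theorem abs_floorStieltjesTerm_dickmanKernel_le_two_div (hρ : IsDickman ρ) {n : ℕ}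
    (hn : 1 ≤ n) :
    |floorStieltjesTerm (dickmanKernel ρ y v) n| ≤ 2 / (n + 1) := by
  have hn1 : (1 : ℝ) ≤ n := by exact_mod_cast hn
  calc _ ≤ (1 + |dickmanKernel ρ y v n| / n) / (n + 1) :=
        abs_floorStieltjesTerm_le hρ.locallyIntegrable_dickmanKernel hn fun t _ =>
          abs_sub_le_of_nonneg_of_le (hρ.dickmanKernel_nonneg _) (hρ.dickmanKernel_le_one _)
            (hρ.dickmanKernel_nonneg _) (hρ.dickmanKernel_le_one _)
    _ ≤ (1 + 1) / (n + 1) := by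
        gcongr
        rw [abs_of_nonneg (hρ.dickmanKernel_nonneg _)]
        exact div_le_one_of_le₀ ((hρ.dickmanKernel_le_one _).trans hn1) (by positivity)
    _ = 2 / (n + 1) := by norm_num

theorem measurable_lamBruijn (hρ : IsDickman ρ) : Measurable (lamBruijn ρ y) := by
  have hρm := hρ.measurable
  have hsum : Measurable fun u => ∑' n : ℕ+, ρ (u - Real.log n / Real.log y) / n :=
    Measurable.tsum fun n => by fun_prop
  have hint : Measurable fun u =>
      ∫ t in Ioi (1:ℝ), ρ (u - Real.log t / Real.log y) * ⌊t⌋ / t ^ 2 :=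
    (Measurable.stronglyMeasurable (by fun_prop : Measurable fun p : ℝ × ℝ =>
      ρ (p.1 - Real.log p.2 / Real.log y) * ⌊p.2⌋ / p.2 ^ 2)).integral_prod_right'.measurable
  exact hsum.sub hint

theorem abs_lamBruijn_le (hρ : IsDickman ρ) (hy : 1 < y) {b : ℝ} (hb : 0 ≤ b)
    (hbl : b < Real.log y) (hv : 0 < v) :
    |lamBruijn ρ y v| ≤ (Real.exp (Real.exp b + b) * Real.exp b * (1 / Real.log y + 1) *
      ∑' n : ℕ, (n : ℝ) ^ (b / Real.log y - 2) + 2) * Real.exp (-(b * v)) := by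
  have hy0 : 0 < y := zero_lt_one.trans hy
  have hL : 0 < Real.log y := Real.log_pos hy
  set C := Real.exp (Real.exp b + b) * Real.exp b * (1 / Real.log y + 1)
  set S := ∑' n : ℕ, (n : ℝ) ^ (b / Real.log y - 2)
  set E := Real.exp (-(b * v))
  set T := floorStieltjesTerm (dickmanKernel ρ y v)
  set N := ⌊y ^ v⌋₊
  have hNy : (N : ℝ) ≤ y ^ v := Nat.floor_le (Real.rpow_pos_of_pos hy0 v).le
  have hN1 : 1 ≤ N := Nat.le_floor (by exact_mod_cast (Real.one_lt_rpow hy hv).le)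
  obtain ⟨m, hm⟩ : ∃ m, N = m + 1 := ⟨N - 1, by omega⟩
  have hinterior : ∑ n ∈ Finset.Icc 1 m, |T n| ≤ C * S * E := by
    have hS : Summable fun n : ℕ => (n : ℝ) ^ (b / Real.log y - 2) :=
      Real.summable_nat_rpow.2 (by linarith [(div_lt_one hL).2 hbl])
    have hCE : 0 ≤ C * E :=
      mul_nonneg (mul_nonneg (by positivity) (by positivity)) (Real.exp_pos _).le
    calc _ ≤ ∑ n ∈ Finset.Icc 1 m, C * E * (n : ℝ) ^ (b / Real.log y - 2) :=
          Finset.sum_le_sum fun n hn => hρ.abs_floorStieltjesTerm_dickmanKernel_le hy hb hbl.le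
            (Finset.mem_Icc.1 hn).1 <| calc
              (n : ℝ) + 1 ≤ N := by
                rw [hm]; exact_mod_cast Nat.succ_le_succ (Finset.mem_Icc.1 hn).2
              _ ≤ y ^ v := hNy
      _ ≤ C * E * S := by
          rw [← Finset.mul_sum]
          exact mul_le_mul_of_nonneg_left
            (hS.sum_le_tsum _ fun n _ => Real.rpow_nonneg n.cast_nonneg _) hCE
      _ = C * S * E := by ring
  have hlast : |T N| ≤ 2 * E :=
    calc |T N| ≤ 2 / (N + 1) := hρ.abs_floorStieltjesTerm_dickmanKernel_le_two_div hN1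
      _ ≤ 2 / y ^ v := by gcongr; exact (Nat.lt_floor_add_one _).le
      _ ≤ 2 * E := by
          rw [div_eq_mul_inv, Real.rpow_def_of_pos hy0, ← Real.exp_neg]
          gcongr 2 * ?_
          exact Real.exp_le_exp.2 (by nlinarith)
  rw [show lamBruijn ρ y v = ∑ n ∈ Finset.Icc 1 N, T n from
      tsum_div_sub_integral_floor_eq_sum hρ.locallyIntegrable_dickmanKernel
        fun t ht => hρ.dickmanKernel_eq_zero hy ht,
    hm, Finset.sum_Icc_succ_top (by omega), ← hm]
  calc _ ≤ ∑ n ∈ Finset.Icc 1 m, |T n| + |T N| :=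
        (abs_add_le _ _).trans (add_le_add_left (Finset.abs_sum_le_sum_abs _ _) _)
    _ ≤ _ := by linarith

end IsDickman

theorem integrableOn_Ioi_cexp_neg_mul_of_abs_le {f : ℝ → ℝ}
    (hf : AEStronglyMeasurable f (volume.restrict (Ioi 0))) {K b : ℝ}
    (hfb : ∀ v, 0 < v → |f v| ≤ K * Real.exp (-(b * v))) {s : ℂ} (hs : -b < s.re) :
    IntegrableOn (fun v : ℝ => Complex.exp (-(s * v)) * (f v : ℂ)) (Ioi 0) := by
  refine Integrable.mono' ((exp_neg_integrableOn_Ioi 0 (by linarith : 0 < s.re + b)).const_mul K)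
    ((by fun_prop : Continuous fun v : ℝ => Complex.exp (-(s * v))).aestronglyMeasurable.mul
      (Complex.continuous_ofReal.comp_aestronglyMeasurable hf))
    ((ae_restrict_iff' measurableSet_Ioi).2 (ae_of_all _ fun v hv => ?_))
  rw [norm_mul, Complex.norm_exp, Complex.norm_real, Real.norm_eq_abs]
  calc Real.exp (-(s * v)).re * |f v| ≤ Real.exp (-(s.re * v)) * (K * Real.exp (-(b * v))) := by
        gcongr
        · simp
        · exact hfb v hv
    _ = K * Real.exp (-(s.re + b) * v) := by rw [mul_left_comm, ← Real.exp_add]; ring_nf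

/-- Corollary A.2. For `y ≥ C_ε`, the Laplace transform
`∫₀^∞ e^{−sv} λ_y(v) dv` converges absolutely for `Re s > −(log y)/(1+ε)`. -/
theorem lambda_y_laplace_converges (dick : ℝ → ℝ) (hdick : IsDickman dick)
    (ε : ℝ) (hε : 0 < ε) :
    ∃ C : ℝ, 0 < C ∧
      ∀ y : ℝ, C ≤ y → ∀ s : ℂ, -(Real.log y) / (1 + ε) < s.re →
        MeasureTheory.IntegrableOn
          (fun v : ℝ => Complex.exp (-(s * v)) * (lamBruijn dick y v : ℂ))
          (Set.Ioi 0) := by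
  refine ⟨2, two_pos, fun y hy s hs => ?_⟩
  have hy1 : 1 < y := by linarith
  have hL : 0 < Real.log y := Real.log_pos hy1
  have hb : 0 ≤ Real.log y / (1 + ε) := by positivity
  have hbl : Real.log y / (1 + ε) < Real.log y := div_lt_self hL (by linarith)
  exact integrableOn_Ioi_cexp_neg_mul_of_abs_le hdick.measurable_lamBruijn.aestronglyMeasurable
    (fun v hv => hdick.abs_lamBruijn_le hy1 hb hbl hv) (by rwa [← neg_div])

end
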